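/- arXiv:1907.10898 — 2 statements merged into one kernel-verified Lean document; each statement's English description precedes it below -/
import Mathlib

section
/- Let $I$ be a countable discrete set and $f, g : I \to [0,\infty)$ with $f$ proper. Fix $c > 0$ and $\delta, \kappa \in \mathbb{R}$ with $\delta + \kappa > 0$ and $\delta \ne 0$. If $\sum_{i \in I,\, f(i) \le t} e^{\kappa f(i)} g(i) \sim \frac{e^{(\delta+\kappa)t}}{\delta + \kappa}$ as $t \to \infty$, then $\sum_{i \in I,\, t-c < f(i) \le t} g(i) \sim \frac{1 - e^{-c\delta}}{\delta} e^{\delta t}$ as $t \to \infty$. -/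
/-!
Write `S(r) = ∑_{f i ≤ r} e^{κ f i} g i` and `ψ(r) = e^{-κ r} S(r)`. Summation by parts against
the weight `e^{-κ r}` gives the exact identity
`∑_{t-c < f i ≤ t} g i = ψ(t) - ψ(t-c) + κ ∫_{t-c}^t ψ`,
and the hypothesis says `ψ(r) = e^{δ r}/(δ+κ) + o(e^{δ r})`. The main term contributes
`(1 + κ/δ)(e^{δ t} - e^{δ(t-c)})/(δ+κ) = (1 - e^{-cδ}) e^{δ t}/δ`, while the error terms stay
`o(e^{δ t})` because the window `[t-c, t]` has fixed length.
-/

open Filter Set MeasureTheory Asymptotics Real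
open scoped Interval

theorem integral_indicator_Ici_eq_sub {φ φ' : ℝ → ℝ} (hφ : ∀ r, HasDerivAt φ (φ' r) r)
    (hφ' : Continuous φ') {u t : ℝ} (hut : u ≤ t) (x : ℝ) :
    ∫ r in u..t, (Ici x).indicator φ' r = φ (max t x) - φ (max u x) := by
  have hIoi : (Ici x).indicator φ' =ᵐ[volume] (Ioi x).indicator φ' :=
    indicator_ae_eq_of_ae_eq_set Ioi_ae_eq_Ici.symm
  have hIoc : Ioc (max u x) t = Ioc (max u x) (max t x) := by
    ext r; simp only [mem_Ioc, sup_lt_iff, le_sup_iff]; grind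
  rw [intervalIntegral.integral_of_le hut, integral_congr_ae (ae_restrict_of_ae hIoi),
    setIntegral_indicator measurableSet_Ioi, Ioc_inter_Ioi, hIoc,
    ← intervalIntegral.integral_of_le (max_le_max_right x hut),
    intervalIntegral.integral_eq_sub_of_hasDerivAt (fun r _ => hφ r) (hφ'.intervalIntegrable _ _)]

theorem IntervalIntegrable.indicator {E : Type*} [NormedAddCommGroup E] {μ : Measure ℝ}
    {g : ℝ → E} {u t : ℝ} (hg : IntervalIntegrable g μ u t) {s : Set ℝ} (hs : MeasurableSet s) :
    IntervalIntegrable (s.indicator g) μ u t :=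
  ⟨hg.1.indicator hs, hg.2.indicator hs⟩

theorem tsum_indicator_eq_sum_of_subset {ι M : Type*} [AddCommMonoid M] [TopologicalSpace M]
    {T s : Set ι} (hT : T.Finite) (hs : s ⊆ T) (w : ι → M) :
    ∑' i, s.indicator w i = ∑ i ∈ hT.toFinset, s.indicator w i :=
  tsum_eq_sum' <| (support_indicator_subset.trans hs).trans hT.coe_toFinset.symm.subset

section Sublevel

variable {ι : Type*} {f : ι → ℝ}

noncomputable def sublevelSum (f w : ι → ℝ) (t : ℝ) : ℝ := ∑' i, {i | f i ≤ t}.indicator w i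

theorem sublevelSum_eq_sum_indicator_Ici (hproper : ∀ t, {i | f i ≤ t}.Finite) (w : ι → ℝ)
    {r t : ℝ} (hrt : r ≤ t) :
    sublevelSum f w r = ∑ i ∈ (hproper t).toFinset, (Ici (f i)).indicator (fun _ => w i) r :=
  tsum_indicator_eq_sum_of_subset (hproper t) (fun _ hi => le_trans hi hrt) w

theorem intervalIntegrable_sublevelSum (hproper : ∀ t, {i | f i ≤ t}.Finite) (w : ι → ℝ)
    (u t : ℝ) : IntervalIntegrable (sublevelSum f w) volume u t := by
  refine IntervalIntegrable.congr (fun r hr =>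
    (sublevelSum_eq_sum_indicator_Ici hproper w (uIoc_subset_uIcc hr).2 (t := max u t)).symm) ?_
  rw [← Finset.sum_fn]
  exact IntervalIntegrable.sum _ fun i _ => intervalIntegrable_const.indicator measurableSet_Ici

theorem tsum_indicator_Ioc_mul_eq_sub_integral (hproper : ∀ t, {i | f i ≤ t}.Finite)
    (w : ι → ℝ) {φ φ' : ℝ → ℝ} (hφ : ∀ r, HasDerivAt φ (φ' r) r) (hφ' : Continuous φ')
    {u t : ℝ} (hut : u ≤ t) :
    ∑' i, {i | u < f i ∧ f i ≤ t}.indicator (fun i => φ (f i) * w i) i =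
      φ t * sublevelSum f w t - φ u * sublevelSum f w u -
        ∫ r in u..t, φ' r * sublevelSum f w r := by
  set F := (hproper t).toFinset
  have hint : ∫ r in u..t, φ' r * sublevelSum f w r =
      ∑ i ∈ F, (φ (max t (f i)) - φ (max u (f i))) * w i := by
    rw [intervalIntegral.integral_congr (g := fun r => ∑ i ∈ F, (Ici (f i)).indicator φ' r * w i)
      fun r hr => ?_]
    · rw [intervalIntegral.integral_finsetSum fun i _ =>
        ((hφ'.intervalIntegrable u t).indicator measurableSet_Ici).mul_const _]
      simp only [intervalIntegral.integral_mul_const, integral_indicator_Ici_eq_sub hφ hφ' hut]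
    · rw [sublevelSum_eq_sum_indicator_Ici hproper w (uIcc_of_le hut ▸ hr).2, Finset.mul_sum]
      refine Finset.sum_congr rfl fun i _ => ?_
      by_cases hir : f i ≤ r <;> simp [hir]
  rw [hint, sublevelSum, sublevelSum,
    tsum_indicator_eq_sum_of_subset (hproper t) (s := {i | u < f i ∧ f i ≤ t}) (fun _ hi => hi.2),
    tsum_indicator_eq_sum_of_subset (hproper t) (s := {i | f i ≤ t}) subset_rfl,
    tsum_indicator_eq_sum_of_subset (hproper t) (s := {i | f i ≤ u}) (fun _ hi => le_trans hi hut),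
    Finset.mul_sum, Finset.mul_sum, ← Finset.sum_sub_distrib, ← Finset.sum_sub_distrib]
  refine Finset.sum_congr rfl fun i hi => ?_
  have hit : f i ≤ t := (hproper t).mem_toFinset.1 hi
  by_cases hiu : f i ≤ u
  · simp only [indicator_apply, mem_ofPred_eq, hit, hiu, not_lt.2 hiu, false_and, if_true,
      if_false, max_eq_left hit, max_eq_left hiu]
    ring
  · simp only [indicator_apply, mem_ofPred_eq, hit, hiu, lt_of_not_ge hiu, and_self, if_true,
      if_false, max_eq_left hit, max_eq_right (le_of_not_ge hiu)]
    ring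

theorem tsum_indicator_Ioc_eq_sub_add_integral_exp (hproper : ∀ t, {i | f i ≤ t}.Finite)
    (g : ι → ℝ) (κ : ℝ) {u t : ℝ} (hut : u ≤ t) :
    ∑' i, {i | u < f i ∧ f i ≤ t}.indicator g i =
      exp (-κ * t) * sublevelSum f (fun i => exp (κ * f i) * g i) t
        - exp (-κ * u) * sublevelSum f (fun i => exp (κ * f i) * g i) u
        + κ * ∫ r in u..t, exp (-κ * r) * sublevelSum f (fun i => exp (κ * f i) * g i) r := by
  have hφ (r : ℝ) : HasDerivAt (fun r => exp (-κ * r)) (-κ * exp (-κ * r)) r := by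
    simpa [mul_comm] using ((hasDerivAt_id r).const_mul (-κ)).exp
  have habel := tsum_indicator_Ioc_mul_eq_sub_integral hproper (fun i => exp (κ * f i) * g i) hφ
    (by fun_prop) hut
  have hg : (fun i => exp (-κ * f i) * (exp (κ * f i) * g i)) = g := funext fun i => by
    rw [← mul_assoc, ← exp_add, neg_mul, neg_add_cancel, exp_zero, one_mul]
  simp only [hg, mul_assoc, intervalIntegral.integral_const_mul] at habel
  rw [habel]
  ring

end Sublevel

theorem isLittleO_exp_comp_sub {G : ℝ → ℝ} {δ : ℝ} (hG : G =o[atTop] fun r => exp (δ * r))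
    (c : ℝ) : (fun t => G (t - c)) =o[atTop] fun t => exp (δ * t) := by
  have hshift : Tendsto (fun t : ℝ => t - c) atTop atTop :=
    tendsto_atTop_add_const_right _ _ tendsto_id
  refine (hG.comp_tendsto hshift).trans_isBigO ?_
  have : (fun t => exp (δ * (t - c))) = fun t => exp (-(δ * c)) * exp (δ * t) := by
    ext t; rw [← exp_add]; ring_nf
  simpa only [Function.comp_def, this] using isBigO_const_mul_self _ _ _

theorem isLittleO_exp_integral_sub {G : ℝ → ℝ} {δ : ℝ} (hG : G =o[atTop] fun r => exp (δ * r))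
    (c : ℝ) : (fun t => ∫ r in (t - c)..t, G r) =o[atTop] fun t => exp (δ * t) := by
  set K := |c| * exp (|δ| * |c|)
  rw [isLittleO_iff] at hG ⊢
  intro ε hε
  obtain ⟨T, hT⟩ := eventually_atTop.1 (hG (c := ε / (K + 1)) (by positivity))
  filter_upwards [eventually_ge_atTop (T + |c|)] with t ht
  have hbound : ∀ r ∈ Ι (t - c) t, ‖G r‖ ≤ ε / (K + 1) * exp (|δ| * |c|) * exp (δ * t) := by
    intro r hr
    have hrt : |t - r| ≤ |c| := by
      simpa using abs_sub_right_of_mem_uIcc (uIoc_subset_uIcc hr)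
    have hexp : exp (δ * r) ≤ exp (|δ| * |c|) * exp (δ * t) := by
      rw [← exp_add, exp_le_exp]
      nlinarith [neg_abs_le (δ * (t - r)), abs_mul δ (t - r), abs_nonneg δ,
        mul_le_mul_of_nonneg_left hrt (abs_nonneg δ)]
    calc ‖G r‖ ≤ ε / (K + 1) * ‖exp (δ * r)‖ := hT r (by linarith [(abs_le.1 hrt).2])
      _ ≤ ε / (K + 1) * (exp (|δ| * |c|) * exp (δ * t)) := by
        rw [norm_of_nonneg (exp_pos _).le]; gcongr
      _ = _ := by ring
  calc ‖∫ r in (t - c)..t, G r‖ ≤ ε / (K + 1) * exp (|δ| * |c|) * exp (δ * t) * |t - (t - c)| :=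
        intervalIntegral.norm_integral_le_of_norm_le_const hbound
    _ = ε * (K / (K + 1)) * ‖exp (δ * t)‖ := by
        rw [sub_sub_cancel, norm_of_nonneg (exp_pos _).le]; ring
    _ ≤ ε * ‖exp (δ * t)‖ := by
        gcongr
        exact mul_le_of_le_one_right hε.le ((div_le_one (by positivity)).2 (by linarith))

theorem integral_exp_mul_sub (δ c t : ℝ) (hδ : δ ≠ 0) :
    ∫ r in (t - c)..t, exp (δ * r) = (1 - exp (-(c * δ))) / δ * exp (δ * t) := by
  have hshift : exp (δ * (t - c)) = exp (-(c * δ)) * exp (δ * t) := by rw [← exp_add]; ring_nf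
  rw [intervalIntegral.integral_comp_mul_left (fun r => exp r) hδ, integral_exp, smul_eq_mul,
    hshift]
  field_simp

theorem sub_add_integral_sub_isLittleO {ψ : ℝ → ℝ} {δ κ : ℝ} (hδ : δ ≠ 0) (hδκ : δ + κ ≠ 0)
    (hψint : ∀ u t, IntervalIntegrable ψ volume u t)
    (hψ : ψ ~[atTop] fun r => exp (δ * r) / (δ + κ)) (c : ℝ) :
    (fun t => ψ t - ψ (t - c) + κ * (∫ r in (t - c)..t, ψ r)
      - (1 - exp (-(c * δ))) / δ * exp (δ * t)) =o[atTop] fun t => exp (δ * t) := by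
  set E : ℝ → ℝ := fun r => exp (δ * r) / (δ + κ)
  have hG : (ψ - E) =o[atTop] fun r => exp (δ * r) :=
    hψ.isLittleO.trans_isBigO (isBigO_const_mul_self (δ + κ)⁻¹ _ _ |>.congr_left
      fun r => by simp [E, div_eq_inv_mul])
  refine ((hG.sub (isLittleO_exp_comp_sub hG c)).add
    ((isLittleO_exp_integral_sub hG c).const_mul_left κ)).congr_left fun t => ?_
  have hE : Continuous E := by fun_prop
  have hshift : exp (δ * (t - c)) = exp (-(c * δ)) * exp (δ * t) := by rw [← exp_add]; ring_nf
  simp only [Pi.sub_apply]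
  rw [intervalIntegral.integral_sub (hψint _ _) (hE.intervalIntegrable _ _)]
  simp only [E, intervalIntegral.integral_div, integral_exp_mul_sub δ c t hδ, hshift]
  field_simp
  ring

theorem stmt1_general {I : Type*} (f g : I → ℝ)
    (hproper : ∀ t : ℝ, {i : I | f i ≤ t}.Finite)
    (c δ κ : ℝ) (hc : 0 < c) (hδκ : 0 < δ + κ) (hδ : δ ≠ 0)
    (h : Tendsto (fun t : ℝ =>
        (∑' i : I, Set.indicator {i : I | f i ≤ t} (fun i => Real.exp (κ * f i) * g i) i)
          / (Real.exp ((δ + κ) * t) / (δ + κ)))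
      atTop (nhds 1)) :
    Tendsto (fun t : ℝ =>
        (∑' i : I, Set.indicator {i : I | t - c < f i ∧ f i ≤ t} g i)
          / ((1 - Real.exp (-(c * δ))) / δ * Real.exp (δ * t)))
      atTop (nhds 1) := by
  set S := sublevelSum f fun i => exp (κ * f i) * g i
  set ψ : ℝ → ℝ := fun r => exp (-κ * r) * S r
  have hψ : ψ ~[atTop] fun r => exp (δ * r) / (δ + κ) := by
    refine ((IsEquivalent.refl (u := fun r => exp (-κ * r))).mul
      (isEquivalent_of_tendsto_one h)).congr_right (Eventually.of_forall fun r => ?_)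
    simp only [Pi.mul_apply, mul_div_assoc', ← exp_add]
    ring_nf
  have hψint (u t : ℝ) : IntervalIntegrable ψ volume u t :=
    (intervalIntegrable_sublevelSum hproper _ u t).continuousOn_mul (by fun_prop)
  have hK : (1 - exp (-(c * δ))) / δ ≠ 0 := by
    refine div_ne_zero (sub_ne_zero.2 (Ne.symm ?_)) hδ
    rw [Ne, exp_eq_one_iff, neg_eq_zero]
    exact mul_ne_zero hc.ne' hδ
  refine (isEquivalent_iff_tendsto_one (Eventually.of_forall fun t =>
    mul_ne_zero hK (exp_pos _).ne')).mp ?_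
  refine ((sub_add_integral_sub_isLittleO hδ hδκ.ne' hψint hψ c).trans_isBigO
    (isBigO_self_const_mul hK _ _)).congr_left fun t => ?_
  rw [Pi.sub_apply, tsum_indicator_Ioc_eq_sub_add_integral_exp hproper g κ (by linarith)]

/-- Asymptotic transfer lemma (Lemma 9.5 of Paulin–Pollicott–Schapira), converse direction:
from asymptotics of exponentially weighted cumulative sums to asymptotics of annulus sums. -/
theorem stmt1 {I : Type*} [Countable I] (f g : I → ℝ)
    (hf0 : ∀ i, 0 ≤ f i) (hg0 : ∀ i, 0 ≤ g i)
    (hproper : ∀ t : ℝ, {i : I | f i ≤ t}.Finite)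
    (c δ κ : ℝ) (hc : 0 < c) (hδκ : 0 < δ + κ) (hδ : δ ≠ 0)
    (h : Tendsto (fun t : ℝ =>
        (∑' i : I, Set.indicator {i : I | f i ≤ t} (fun i => Real.exp (κ * f i) * g i) i)
          / (Real.exp ((δ + κ) * t) / (δ + κ)))
      atTop (nhds 1)) :
    Tendsto (fun t : ℝ =>
        (∑' i : I, Set.indicator {i : I | t - c < f i ∧ f i ≤ t} g i)
          / ((1 - Real.exp (-(c * δ))) / δ * Real.exp (δ * t)))
      atTop (nhds 1) :=
  stmt1_general f g hproper c δ κ hc hδκ hδ h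
end

section
/- Let $I$ be a countable set, $f : I \to [0,\infty)$ proper, $g : I \to [0,\infty)$, $\delta > 0$, $c > 0$ and $L > 0$. If $S(T) := \sum_{i : T - c < f(i) \le T} g(i)$ satisfies $S(T) \sim \frac{1 - e^{-\delta c}}{\delta T} e^{\delta T} L$ as $T \to \infty$, then $\sum_{i : f(i) \le T} g(i) \sim \frac{e^{\delta T}}{\delta T} L$ as $T \to \infty$. -/
open Filter

private lemma aux_poly_exp (n : ℕ) (a : ℝ) (ha : 0 < a) :
    Tendsto (fun T : ℝ => T ^ n * Real.exp (-(a * T))) atTop (nhds 0) := by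
  have h1 : Tendsto (fun T : ℝ => a * T) atTop atTop :=
    Tendsto.const_mul_atTop ha tendsto_id
  have h2 := (Real.tendsto_pow_mul_exp_neg_atTop_nhds_zero n).comp h1
  have h3 := h2.const_mul ((1:ℝ) / a ^ n)
  rw [mul_zero] at h3
  convert h3 using 2 with T
  simp only [Function.comp]
  have han : (a:ℝ) ^ n ≠ 0 := pow_ne_zero _ ha.ne'
  field_simp
  ring

set_option maxHeartbeats 1600000 in
/-- Summation over annuli: if the annulus sums satisfy
`S(T) = ∑_{T-c < f i ≤ T} g i ∼ ((1 - e^{-δc}) / (δT)) e^{δT} L`, then the cumulative sums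
satisfy `∑_{f i ≤ T} g i ∼ (e^{δT} / (δT)) L` as `T → ∞`. -/
theorem stmt16 {I : Type*} [Countable I] (f g : I → ℝ)
    (hf0 : ∀ i, 0 ≤ f i) (hg0 : ∀ i, 0 ≤ g i)
    (hproper : ∀ t : ℝ, {i : I | f i ≤ t}.Finite)
    (δ c L : ℝ) (hδ : 0 < δ) (hc : 0 < c) (hL : 0 < L)
    (h : Tendsto (fun T : ℝ =>
        (∑' i : I, Set.indicator {i : I | T - c < f i ∧ f i ≤ T} g i)
          / ((1 - Real.exp (-(δ * c))) / (δ * T) * Real.exp (δ * T) * L))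
      atTop (nhds 1)) :
    Tendsto (fun T : ℝ =>
        (∑' i : I, Set.indicator {i : I | f i ≤ T} g i)
          / (Real.exp (δ * T) / (δ * T) * L))
      atTop (nhds 1) := by
  set r : ℝ := Real.exp (-(δ * c)) with hrdef
  have hr0 : 0 < r := Real.exp_pos _
  have hr1 : r < 1 := by
    rw [hrdef, Real.exp_lt_one_iff]
    nlinarith
  have hr1' : (0:ℝ) < 1 - r := by linarith
  set S : ℝ → ℝ := fun t => ∑' i : I, Set.indicator {i : I | t - c < f i ∧ f i ≤ t} g i
    with hSdef
  set F : ℝ → ℝ := fun t => ∑' i : I, Set.indicator {i : I | f i ≤ t} g i with hFdef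
  set B : ℝ → ℝ := fun t => (1 - r) / (δ * t) * Real.exp (δ * t) * L with hBdef
  suffices hgoal : Tendsto (fun T : ℝ => F T / (Real.exp (δ * T) / (δ * T) * L)) atTop
      (nhds 1) by
    simpa only [hFdef] using hgoal
  have hSB : Tendsto (fun T : ℝ => S T / B T) atTop (nhds 1) := by
    simp only [hSdef, hBdef]
    exact h
  -- summability
  have hsum : ∀ (t : ℝ) (s : Set I), (∀ i ∈ s, f i ≤ t) → Summable (s.indicator g) := by
    intro t s hs
    apply summable_of_ne_finset_zero (s := (hproper t).toFinset)
    intro i hi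
    apply Set.indicator_of_notMem
    intro his
    exact hi ((hproper t).mem_toFinset.2 (hs i his))
  have hsumF : ∀ t : ℝ, Summable (Set.indicator {i : I | f i ≤ t} g) :=
    fun t => hsum t _ (fun i hi => hi)
  have hsumS : ∀ t : ℝ, Summable (Set.indicator {i : I | t - c < f i ∧ f i ≤ t} g) :=
    fun t => hsum t _ (fun i hi => hi.2)
  -- nonnegativity
  have hFnn : ∀ t, 0 ≤ F t := by
    intro t
    simp only [hFdef]
    exact tsum_nonneg (fun i => Set.indicator_nonneg (fun j _ => hg0 j) i)
  -- monotonicity of F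
  have hFmono : ∀ t t' : ℝ, t ≤ t' → F t ≤ F t' := by
    intro t t' htt
    simp only [hFdef]
    apply Summable.tsum_le_tsum _ (hsumF t) (hsumF t')
    intro i
    exact Set.indicator_le_indicator_of_subset (fun j hj => le_trans hj htt) hg0 i
  -- one-step decomposition
  have hFS : ∀ t : ℝ, F t = S t + F (t - c) := by
    intro t
    have hpt : ∀ i : I, Set.indicator {i : I | f i ≤ t} g i
        = Set.indicator {i : I | t - c < f i ∧ f i ≤ t} g i
          + Set.indicator {i : I | f i ≤ t - c} g i := by
      intro i
      by_cases h1 : f i ≤ t - c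
      · have h2 : f i ≤ t := by linarith
        have h3 : ¬(t - c < f i ∧ f i ≤ t) := fun hx => absurd hx.1 (not_lt.2 h1)
        simp [Set.indicator_apply, Set.mem_setOf_eq, h1, h2, h3]
      · by_cases h2 : f i ≤ t
        · have h3 : t - c < f i ∧ f i ≤ t := ⟨not_le.1 h1, h2⟩
          simp [Set.indicator_apply, Set.mem_setOf_eq, h1, h2, h3]
        · have h3 : ¬(t - c < f i ∧ f i ≤ t) := fun hx => h2 hx.2
          simp [Set.indicator_apply, Set.mem_setOf_eq, h1, h2, h3]
    calc F t = ∑' i : I, (Set.indicator {i : I | t - c < f i ∧ f i ≤ t} g i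
          + Set.indicator {i : I | f i ≤ t - c} g i) := by
            simp only [hFdef]
            exact tsum_congr hpt
      _ = S t + F (t - c) := by
            simp only [hSdef, hFdef]
            exact Summable.tsum_add (hsumS t) (hsumF (t - c))
  -- full decomposition
  have hdecomp : ∀ (T : ℝ) (K : ℕ),
      F T = (∑ k ∈ Finset.range K, S (T - k * c)) + F (T - K * c) := by
    intro T K
    induction K with
    | zero => simp
    | succ n ih =>
      rw [ih, hFS (T - n * c), Finset.sum_range_succ]
      have he : T - (n:ℝ) * c - c = T - ((n + 1 : ℕ) : ℝ) * c := by push_cast; ring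
      rw [he]
      ring
  -- exp identity
  have hexp : ∀ (T : ℝ) (k : ℕ), Real.exp (δ * (T - k * c)) = Real.exp (δ * T) * r ^ k := by
    intro T k
    rw [hrdef, ← Real.exp_nat_mul, ← Real.exp_add]
    congr 1
    ring
  have hrpow : ∀ k : ℕ, r ^ k = Real.exp ((k : ℝ) * (-(δ * c))) := by
    intro k
    rw [hrdef, Real.exp_nat_mul]
  -- geometric sum bounds
  have hgeom_eq : ∀ K : ℕ, (∑ k ∈ Finset.range K, r ^ k) = (1 - r ^ K) / (1 - r) := by
    intro K
    rw [geom_sum_eq (ne_of_lt hr1) K, ← neg_div_neg_eq]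
    ring_nf
  -- bound extraction from h
  have hSbound : ∀ ε : ℝ, 0 < ε → ∃ T₀ : ℝ, 1 ≤ T₀ ∧ ∀ t, T₀ ≤ t →
      (1 - ε) * B t ≤ S t ∧ S t ≤ (1 + ε) * B t := by
    intro ε hε
    have h' := Metric.tendsto_nhds.mp hSB ε hε
    rw [eventually_atTop] at h'
    obtain ⟨T₁, hT₁⟩ := h'
    refine ⟨max T₁ 1, le_max_right _ _, fun t ht => ?_⟩
    have ht1 : (1:ℝ) ≤ t := le_trans (le_max_right _ _) ht
    have htpos : 0 < t := by linarith
    have hBpos : 0 < B t := by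
      rw [hBdef]
      have := Real.exp_pos (δ * t)
      positivity
    have hd := hT₁ t (le_trans (le_max_left _ _) ht)
    rw [Real.dist_eq, abs_lt] at hd
    have hBne : B t ≠ 0 := ne_of_gt hBpos
    constructor
    · have h1 : 1 - ε < S t / B t := by
        have := hd.1
        linarith
      calc (1 - ε) * B t ≤ (S t / B t) * B t := by nlinarith
        _ = S t := by field_simp
    · have h1 : S t / B t < 1 + ε := by
        have := hd.2
        linarith
      calc S t = (S t / B t) * B t := by field_simp
        _ ≤ (1 + ε) * B t := by nlinarith
  clear_value r S F B
  clear h hSB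
  -- main proof via order
  apply tendsto_order.2
  constructor
  · -- lower bound: ∀ a < 1, eventually a < ratio
    intro a ha
    set ε : ℝ := min ((1 - a) / 2) (1 / 2) with hεdef
    have hε0 : 0 < ε := by
      apply lt_min
      · linarith
      · norm_num
    have hε2 : ε ≤ 1 / 2 := min_le_right _ _
    have h1ε : (0:ℝ) < 1 - ε := by linarith
    have hεa : a < 1 - ε := by
      have : ε ≤ (1 - a) / 2 := min_le_left _ _
      linarith
    clear_value ε
    obtain ⟨T₀, hT₀1, hT₀⟩ := hSbound ε hε0
    have hG : Tendsto (fun T : ℝ => (1 - ε) * (1 - Real.exp (-(δ * ε * T)))) atTop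
        (nhds ((1 - ε) * (1 - 0))) := by
      apply Tendsto.const_mul
      apply Tendsto.const_sub
      have := aux_poly_exp 0 (δ * ε) (by positivity)
      simpa using this
    rw [mul_sub, mul_zero, sub_zero, mul_one] at hG
    have hGa : ∀ᶠ T : ℝ in atTop, a < (1 - ε) * (1 - Real.exp (-(δ * ε * T))) :=
      hG.eventually (eventually_gt_nhds hεa)
    filter_upwards [hGa, eventually_ge_atTop (T₀ / (1 - ε)), eventually_ge_atTop (1:ℝ)]
      with T hg1 hg2 hg3
    have hTpos : 0 < T := by linarith
    have hεT : T₀ ≤ (1 - ε) * T := by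
      rw [div_le_iff₀ h1ε] at hg2
      nlinarith
    have hCpos : 0 < Real.exp (δ * T) / (δ * T) * L := by
      have := Real.exp_pos (δ * T)
      positivity
    rw [lt_div_iff₀ hCpos]
    set K₂ : ℕ := ⌊ε * T / c⌋₊ + 1 with hK₂def
    have hkle : ∀ k : ℕ, k < K₂ → (k : ℝ) * c ≤ ε * T := by
      intro k hk
      have hk' : (k : ℝ) ≤ (⌊ε * T / c⌋₊ : ℝ) := Nat.cast_le.2 (Nat.lt_succ_iff.mp hk)
      have h2 : (⌊ε * T / c⌋₊ : ℝ) ≤ ε * T / c := Nat.floor_le (by positivity)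
      have h3 : (k : ℝ) ≤ ε * T / c := le_trans hk' h2
      rw [le_div_iff₀ hc] at h3
      linarith
    have hK₂big : ε * T ≤ (K₂ : ℝ) * c := by
      have h1 : ε * T / c < (K₂ : ℝ) := by
        push_cast [hK₂def]
        exact Nat.lt_floor_add_one _
      rw [div_lt_iff₀ hc] at h1
      linarith
    clear_value K₂
    -- lower bound on F T
    have step1 : ∀ k ∈ Finset.range K₂,
        ((1 - ε) * ((1 - r) / (δ * T) * Real.exp (δ * T) * L)) * r ^ k ≤ S (T - k * c) := by
      intro k hk
      rw [Finset.mem_range] at hk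
      have h1 : (k : ℝ) * c ≤ ε * T := hkle k hk
      have h2 : T₀ ≤ T - k * c := by nlinarith
      refine le_trans ?_ ((hT₀ (T - k * c) h2).1)
      have hTk0 : 0 < T - k * c := by nlinarith
      have hBeq : B (T - k * c)
          = (1 - r) / (δ * (T - k * c)) * (Real.exp (δ * T) * r ^ k) * L := by
        rw [hBdef]
        simp only
        rw [hexp T k]
      rw [hBeq]
      have hdd : (1 - r) / (δ * T) ≤ (1 - r) / (δ * (T - k * c)) := by
        rw [div_le_div_iff₀ (by positivity) (by positivity)]
        have h1' : T - (k:ℝ) * c ≤ T := by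
          have : (0:ℝ) ≤ (k:ℝ) * c := by positivity
          linarith
        exact mul_le_mul_of_nonneg_left (mul_le_mul_of_nonneg_left h1' hδ.le) hr1'.le
      have hx : (0:ℝ) ≤ Real.exp (δ * T) * r ^ k * L := by positivity
      have hmul := mul_le_mul_of_nonneg_right hdd hx
      calc ((1 - ε) * ((1 - r) / (δ * T) * Real.exp (δ * T) * L)) * r ^ k
          = (1 - ε) * ((1 - r) / (δ * T) * (Real.exp (δ * T) * r ^ k * L)) := by ring
        _ ≤ (1 - ε) * ((1 - r) / (δ * (T - k * c)) * (Real.exp (δ * T) * r ^ k * L)) :=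
            mul_le_mul_of_nonneg_left hmul (by linarith)
        _ = (1 - ε) * ((1 - r) / (δ * (T - k * c)) * (Real.exp (δ * T) * r ^ k) * L) := by
            ring
    have step3 : (∑ k ∈ Finset.range K₂, S (T - k * c)) ≤ F T := by
      rw [hdecomp T K₂]
      have := hFnn (T - K₂ * c)
      linarith
    have step2 : ((1 - ε) * ((1 - r) / (δ * T) * Real.exp (δ * T) * L))
        * ((1 - r ^ K₂) / (1 - r)) ≤ F T := by
      refine le_trans ?_ (le_trans (Finset.sum_le_sum step1) step3)
      rw [← Finset.mul_sum, hgeom_eq K₂]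
    have hrK : r ^ K₂ ≤ Real.exp (-(δ * ε * T)) := by
      rw [hrpow K₂]
      apply Real.exp_le_exp.2
      nlinarith [mul_le_mul_of_nonneg_left hK₂big hδ.le]
    have hδT : δ * T ≠ 0 := by positivity
    have h1rne : (1 : ℝ) - r ≠ 0 := ne_of_gt hr1'
    calc a * (Real.exp (δ * T) / (δ * T) * L)
        < ((1 - ε) * (1 - Real.exp (-(δ * ε * T)))) * (Real.exp (δ * T) / (δ * T) * L) := by
          apply mul_lt_mul_of_pos_right hg1 hCpos
      _ = ((1 - ε) * ((1 - r) / (δ * T) * Real.exp (δ * T) * L))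
            * ((1 - Real.exp (-(δ * ε * T))) / (1 - r)) := by
          field_simp
      _ ≤ ((1 - ε) * ((1 - r) / (δ * T) * Real.exp (δ * T) * L))
            * ((1 - r ^ K₂) / (1 - r)) := by
          have hXnn : (0:ℝ) ≤ (1 - ε) * ((1 - r) / (δ * T) * Real.exp (δ * T) * L) := by
            have := Real.exp_pos (δ * T)
            positivity
          apply mul_le_mul_of_nonneg_left _ hXnn
          apply (div_le_div_iff_of_pos_right hr1').2
          linarith
      _ ≤ F T := step2
  · -- upper bound: ∀ b > 1, eventually ratio < b
    intro b hb
    set ε : ℝ := min ((b - 1) / 8) (1 / 2) with hεdef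
    have hε0 : 0 < ε := by
      apply lt_min
      · linarith
      · norm_num
    have hε2 : ε ≤ 1 / 2 := min_le_right _ _
    have h1ε : (0:ℝ) < 1 - ε := by linarith
    have hεb : (1 + ε) / (1 - ε) < b := by
      have h8 : ε ≤ (b - 1) / 8 := min_le_left _ _
      rw [div_lt_iff₀ h1ε]
      nlinarith
    clear_value ε
    obtain ⟨T₀, hT₀1, hT₀⟩ := hSbound ε hε0
    have hT₀0 : (0:ℝ) < T₀ := by linarith
    set M : ℝ := F T₀ with hMdef
    have hM0 : 0 ≤ M := hFnn T₀
    clear_value M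
    -- the upper envelope H
    set E₁ : ℝ → ℝ := fun T => ((1 + ε) * (1 - r) / T₀)
        * ((1 / c) * (T ^ 2 * Real.exp (-(δ * ε * T))) + T ^ 1 * Real.exp (-(δ * ε * T)))
      with hE₁def
    set E₂ : ℝ → ℝ := fun T => (M * δ / L) * (T ^ 1 * Real.exp (-(δ * T))) with hE₂def
    have hδε : 0 < δ * ε := by positivity
    have hE₁lim : Tendsto E₁ atTop (nhds 0) := by
      have h1 := ((aux_poly_exp 2 (δ * ε) hδε).const_mul (1 / c)).add
        (aux_poly_exp 1 (δ * ε) hδε)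
      have h2 := h1.const_mul ((1 + ε) * (1 - r) / T₀)
      rw [hE₁def]
      simpa using h2
    have hE₂lim : Tendsto E₂ atTop (nhds 0) := by
      have := (aux_poly_exp 1 δ hδ).const_mul (M * δ / L)
      rw [hE₂def]
      simpa using this
    clear_value E₁ E₂
    have hHlim : Tendsto (fun T => (1 + ε) / (1 - ε) + E₁ T + E₂ T) atTop
        (nhds ((1 + ε) / (1 - ε) + 0 + 0)) :=
      (tendsto_const_nhds.add hE₁lim).add hE₂lim
    rw [add_zero, add_zero] at hHlim
    have hHb : ∀ᶠ T : ℝ in atTop, (1 + ε) / (1 - ε) + E₁ T + E₂ T < b :=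
      hHlim.eventually (eventually_lt_nhds hεb)
    filter_upwards [hHb, eventually_ge_atTop T₀, eventually_ge_atTop (1:ℝ)]
      with T hH1 hH2 hH3
    have hTpos : 0 < T := by linarith
    have hCpos : 0 < Real.exp (δ * T) / (δ * T) * L := by
      have := Real.exp_pos (δ * T)
      positivity
    rw [div_lt_iff₀ hCpos]
    refine lt_of_le_of_lt ?_ (mul_lt_mul_of_pos_right hH1 hCpos)
    -- now: F T ≤ H T * C T
    set K : ℕ := ⌊(T - T₀) / c⌋₊ + 1 with hKdef
    have hkK : ∀ k : ℕ, k < K → (k : ℝ) * c ≤ T - T₀ := by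
      intro k hk
      have hk' : (k : ℝ) ≤ (⌊(T - T₀) / c⌋₊ : ℝ) := Nat.cast_le.2 (Nat.lt_succ_iff.mp hk)
      have h2 : (⌊(T - T₀) / c⌋₊ : ℝ) ≤ (T - T₀) / c :=
        Nat.floor_le (div_nonneg (by linarith) hc.le)
      have h3 : (k : ℝ) ≤ (T - T₀) / c := le_trans hk' h2
      rw [le_div_iff₀ hc] at h3
      linarith
    have hTK : T - (K : ℝ) * c ≤ T₀ := by
      have h1 : (T - T₀) / c < (K : ℝ) := by
        push_cast [hKdef]
        exact Nat.lt_floor_add_one _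
      rw [div_lt_iff₀ hc] at h1
      linarith
    have hKle : (K : ℝ) ≤ T / c + 1 := by
      have h2 : (⌊(T - T₀) / c⌋₊ : ℝ) ≤ (T - T₀) / c :=
        Nat.floor_le (div_nonneg (by linarith) hc.le)
      have h3 : (T - T₀) / c ≤ T / c := by
        gcongr
        linarith
      push_cast [hKdef]
      linarith
    clear_value K
    have hFsplit : F T ≤ (∑ k ∈ Finset.range K, S (T - k * c)) + M := by
      rw [hdecomp T K]
      have := hFmono (T - K * c) T₀ hTK
      rw [hMdef]
      linarith
    set Q : ℝ := (1 + ε) * ((1 - r) / δ * Real.exp (δ * T) * L) with hQdef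
    have hQ0 : 0 ≤ Q := by
      rw [hQdef]
      have := Real.exp_pos (δ * T)
      positivity
    clear_value Q
    have hterm : ∀ k ∈ Finset.range K,
        S (T - k * c) ≤ Q * (r ^ k / ((1 - ε) * T) + Real.exp (-(δ * ε * T)) / T₀) := by
      intro k hk
      rw [Finset.mem_range] at hk
      have hkc : (k : ℝ) * c ≤ T - T₀ := hkK k hk
      have h2 : T₀ ≤ T - k * c := by linarith
      have hTk0 : 0 < T - k * c := by linarith
      refine le_trans ((hT₀ (T - k * c) h2).2) ?_
      have hBeq : B (T - k * c)
          = ((1 - r) / δ * Real.exp (δ * T) * L) * (r ^ k / (T - k * c)) := by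
        rw [hBdef]
        simp only
        rw [hexp T k]
        field_simp
      rw [hBeq, hQdef]
      have hfrac : r ^ k / (T - k * c)
          ≤ r ^ k / ((1 - ε) * T) + Real.exp (-(δ * ε * T)) / T₀ := by
        by_cases hcase : (k : ℝ) * c ≤ ε * T
        · have hle : (1 - ε) * T ≤ T - k * c := by nlinarith
          have h1 : r ^ k / (T - k * c) ≤ r ^ k / ((1 - ε) * T) :=
            div_le_div_of_nonneg_left (pow_nonneg hr0.le k) (by positivity) hle
          have h2 : 0 ≤ Real.exp (-(δ * ε * T)) / T₀ := by positivity
          linarith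
        · have h1 : r ^ k ≤ Real.exp (-(δ * ε * T)) := by
            rw [hrpow k]
            apply Real.exp_le_exp.2
            push_neg at hcase
            nlinarith
          have h2 : r ^ k / (T - k * c) ≤ Real.exp (-(δ * ε * T)) / T₀ := by
            apply div_le_div₀ (Real.exp_pos _).le h1 hT₀0 h2
          have h3 : 0 ≤ r ^ k / ((1 - ε) * T) := by positivity
          linarith
      have hE0 : (0:ℝ) ≤ (1 - r) / δ * Real.exp (δ * T) * L := by
        have := Real.exp_pos (δ * T)
        positivity
      calc (1 + ε) * (((1 - r) / δ * Real.exp (δ * T) * L) * (r ^ k / (T - k * c)))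
          ≤ (1 + ε) * (((1 - r) / δ * Real.exp (δ * T) * L)
              * (r ^ k / ((1 - ε) * T) + Real.exp (-(δ * ε * T)) / T₀)) := by
            apply mul_le_mul_of_nonneg_left _ (by linarith : (0:ℝ) ≤ 1 + ε)
            exact mul_le_mul_of_nonneg_left hfrac hE0
        _ = (1 + ε) * ((1 - r) / δ * Real.exp (δ * T) * L)
              * (r ^ k / ((1 - ε) * T) + Real.exp (-(δ * ε * T)) / T₀) := by ring
    have hsum1 : (∑ k ∈ Finset.range K, S (T - k * c))
        ≤ Q * ((∑ k ∈ Finset.range K, r ^ k) / ((1 - ε) * T)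
            + (K : ℝ) * (Real.exp (-(δ * ε * T)) / T₀)) := by
      refine le_trans (Finset.sum_le_sum hterm) (le_of_eq ?_)
      rw [← Finset.mul_sum]
      congr 1
      rw [Finset.sum_add_distrib, Finset.sum_div, Finset.sum_const, Finset.card_range,
        nsmul_eq_mul]
    have hgeom_le : (∑ k ∈ Finset.range K, r ^ k) ≤ 1 / (1 - r) := by
      rw [hgeom_eq K]
      apply (div_le_div_iff_of_pos_right hr1').2
      linarith [pow_nonneg hr0.le K]
    -- combine
    have hmain : F T ≤ Q * (1 / (1 - r) / ((1 - ε) * T))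
        + Q * ((T / c + 1) * (Real.exp (-(δ * ε * T)) / T₀)) + M := by
      have h1 : Q * ((∑ k ∈ Finset.range K, r ^ k) / ((1 - ε) * T)
            + (K : ℝ) * (Real.exp (-(δ * ε * T)) / T₀))
          ≤ Q * (1 / (1 - r) / ((1 - ε) * T))
            + Q * ((T / c + 1) * (Real.exp (-(δ * ε * T)) / T₀)) := by
        rw [mul_add]
        apply add_le_add
        · apply mul_le_mul_of_nonneg_left _ hQ0
          apply div_le_div_of_nonneg_right hgeom_le (by positivity)
        · apply mul_le_mul_of_nonneg_left _ hQ0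
          apply mul_le_mul_of_nonneg_right hKle (by positivity)
      linarith [hFsplit, le_trans hsum1 h1]
    refine le_trans hmain (le_of_eq ?_)
    -- algebraic identity
    have hexpTne : Real.exp (δ * T) ≠ 0 := (Real.exp_pos _).ne'
    have hexpinv : Real.exp (-(δ * T)) * Real.exp (δ * T) = 1 := by
      rw [← Real.exp_add]
      simp
    have e1 : Q * (1 / (1 - r) / ((1 - ε) * T))
        = (1 + ε) / (1 - ε) * (Real.exp (δ * T) / (δ * T) * L) := by
      rw [hQdef]
      field_simp
    have e2 : Q * ((T / c + 1) * (Real.exp (-(δ * ε * T)) / T₀))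
        = E₁ T * (Real.exp (δ * T) / (δ * T) * L) := by
      rw [hQdef, hE₁def]
      simp only
      field_simp
    have e3 : M = E₂ T * (Real.exp (δ * T) / (δ * T) * L) := by
      rw [hE₂def]
      simp only [pow_one, Real.exp_neg]
      field_simp
    rw [e1, e2]
    nth_rewrite 1 [e3]
    ring
end
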